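/- arXiv:2310.05003 — 6 statements merged into one kernel-verified Lean document; each statement's English description precedes it below -/
import Mathlib

section
/- Fix A with 1 < A < 2 and suppose F : ℝ → ℝ satisfies −A·F(t) − 1 < F(2t) < −A·F(t) + 1 for all t > 0. If for some t > 0 and h > 0 one has F(t) > 1/(A−1) + h, then for every even n, F(2ⁿ t) > 1/(A−1) + h·Aⁿ, and for every odd n, F(2ⁿ t) < −1/(A−1) − h·Aⁿ. Consequently liminf_{t→+∞} F(t) = −∞ and limsup_{t→+∞} F(t) = +∞. -/
/-!
With `B = 1 / (A - 1)` we have `A * B - 1 = B`, so the doubling inequality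
`|F (2 * s) + A * F s| < 1` sends `F s > B + x` to `F (2 * s) < -B - A * x` and
`F s < -B - x` to `F (2 * s) > B + A * x`. Starting from `F t > B + h`, the values
`F (2 ^ n * t)` therefore alternate in sign outside `[-B, B]` with excess at least
`h * A ^ n`, which tends to infinity along the scales `2 ^ n * t → ∞`.
-/

open Filter

theorem lt_neg_mul_of_abs_add_mul_lt {A a b x σ : ℝ} (hA : 1 < A) (hσ : |σ| = 1)
    (hab : |b + A * a| < 1) (ha : 1 / (A - 1) + x < σ * a) :
    1 / (A - 1) + A * x < -σ * b := by
  have hB : A * (1 / (A - 1)) - 1 = 1 / (A - 1) := by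
    field_simp [(sub_pos.mpr hA).ne']
    ring
  have hσab : |σ * (b + A * a)| < 1 := by rwa [abs_mul, hσ, one_mul]
  have hAa : A * (1 / (A - 1) + x) < A * (σ * a) := mul_lt_mul_of_pos_left ha (by linarith)
  linarith [le_abs_self (σ * (b + A * a))]

theorem add_mul_pow_lt_neg_one_pow_mul {A : ℝ} (hA : 1 < A) {F : ℝ → ℝ}
    (hdouble : ∀ s > 0, |F (2 * s) + A * F s| < 1) {t h : ℝ} (ht : 0 < t)
    (hFt : 1 / (A - 1) + h < F t) (n : ℕ) :
    1 / (A - 1) + h * A ^ n < (-1) ^ n * F (2 ^ n * t) := by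
  induction n with
  | zero => simpa using hFt
  | succ n ih =>
    have hstep := lt_neg_mul_of_abs_add_mul_lt hA (by simp)
      (hdouble (2 ^ n * t) (by positivity)) ih
    rw [show (2 : ℝ) ^ (n + 1) * t = 2 * (2 ^ n * t) by ring]
    convert hstep using 1 <;> ring

theorem frequently_lt_apply_of_tendsto {F : ℝ → ℝ} {s g : ℕ → ℝ} {p : ℕ → Prop}
    (hp : ∃ᶠ n in atTop, p n) (hs : Tendsto s atTop atTop) (hg : Tendsto g atTop atTop)
    (hF : ∀ n, p n → g n < F (s n)) (C : ℝ) : ∃ᶠ x in atTop, C < F x :=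
  hs.frequently <| (hp.and_eventually (hg.eventually_gt_atTop C)).mono
    fun n ⟨hpn, hgn⟩ => hgn.trans (hF n hpn)

theorem stmt_4_general (A : ℝ) (hA : 1 < A) (F : ℝ → ℝ)
    (hdouble : ∀ t > 0, -A * F t - 1 < F (2 * t) ∧ F (2 * t) < -A * F t + 1)
    (t h : ℝ) (ht : 0 < t) (hh : 0 < h) (hFt : F t > 1 / (A - 1) + h) :
    (∀ n : ℕ, Even n → F (2 ^ n * t) > 1 / (A - 1) + h * A ^ n) ∧
    (∀ n : ℕ, Odd n → F (2 ^ n * t) < -(1 / (A - 1)) - h * A ^ n) ∧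
    (∀ C : ℝ, ∃ᶠ s in Filter.atTop, F s < C) ∧
    (∀ C : ℝ, ∃ᶠ s in Filter.atTop, C < F s) := by
  have hgrowth := add_mul_pow_lt_neg_one_pow_mul hA
    (fun s hs => abs_lt.mpr ⟨by linarith [(hdouble s hs).1], by linarith [(hdouble s hs).2]⟩)
    ht hFt
  have heven (n : ℕ) (hn : Even n) : F (2 ^ n * t) > 1 / (A - 1) + h * A ^ n := by
    simpa [hn.neg_one_pow] using hgrowth n
  have hodd (n : ℕ) (hn : Odd n) : F (2 ^ n * t) < -(1 / (A - 1)) - h * A ^ n := by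
    have := hgrowth n
    rw [hn.neg_one_pow, neg_one_mul] at this
    linarith
  have hscale : Tendsto (fun n : ℕ => (2 : ℝ) ^ n * t) atTop atTop :=
    (tendsto_pow_atTop_atTop_of_one_lt one_lt_two).atTop_mul_const ht
  have hexcess : Tendsto (fun n : ℕ => 1 / (A - 1) + h * A ^ n) atTop atTop :=
    tendsto_atTop_add_const_left _ _ ((tendsto_pow_atTop_atTop_of_one_lt hA).const_mul_atTop hh)
  refine ⟨heven, hodd, fun C => ?_,
    frequently_lt_apply_of_tendsto Nat.frequently_even hscale hexcess heven⟩
  simpa using frequently_lt_apply_of_tendsto (F := fun x => -F x) Nat.frequently_odd hscale hexcess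
    (fun n hn => by linarith [hodd n hn]) (-C)

theorem stmt_4 (A : ℝ) (hA : 1 < A) (hA2 : A < 2) (F : ℝ → ℝ)
    (hdouble : ∀ t > 0, -A * F t - 1 < F (2 * t) ∧ F (2 * t) < -A * F t + 1)
    (t h : ℝ) (ht : 0 < t) (hh : 0 < h) (hFt : F t > 1 / (A - 1) + h) :
    (∀ n : ℕ, Even n → F (2 ^ n * t) > 1 / (A - 1) + h * A ^ n) ∧
    (∀ n : ℕ, Odd n → F (2 ^ n * t) < -(1 / (A - 1)) - h * A ^ n) ∧
    (∀ C : ℝ, ∃ᶠ s in Filter.atTop, F s < C) ∧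
    (∀ C : ℝ, ∃ᶠ s in Filter.atTop, C < F s) :=
  stmt_4_general A hA F hdouble t h ht hh hFt
end

section
/- Let α ∈ ℝⁿ be completely irrational (1, α₁, …, α_n linearly independent over ℚ), and let (σ_t) be a sequence of positive reals decreasing to 0. Then there exists a continuous function f : 𝕋ⁿ → ℝ with zero mean value and sup norm at most π, and an integer t₀, such that ∑_{k=0}^{t−1} f(kα) ≥ t·σ_t for all t ≥ t₀. -/
open Filter MeasureTheory Finset

/-! The function depends on one coordinate only and sees the rotation by β = α₀. It is a
uniformly convergent series `∑ⱼ (Ψⱼ(x + β) - Ψⱼ(x))` of coboundaries of continuous 1-periodic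
functions, so it is continuous, bounded by `∑ⱼ εⱼ` and has mean zero, while its Birkhoff sums
telescope to `∑ⱼ Ψⱼ(tβ) ≥ Ψ_J(tβ)`. The block `Ψⱼ` moves by at most `εⱼ` per rotation step,
yet `Ψⱼ(tβ) ≥ min(Mⱼ, εⱼ t)` for `t ≤ aⱼ₊₁`, because the points `sβ`, `0 < |s| ≤ 2aⱼ₊₁`, stay a
positive distance away from `0` mod 1. With `aⱼ` increasing so fast that `σ(aⱼ) ≤ εⱼ`, and
`Mⱼ = aⱼ₊₁ σ(aⱼ)`, every `t ∈ [a_J, a_{J+1})` satisfies `t σ(t) ≤ min(M_J, ε_J t)`. -/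

/-- A distance from `x` to the orbit `{sβ}` in `ℝ/ℤ` in which reaching `sβ` costs `ε|s|`,
capped at `M`. -/
noncomputable def orbitPotential (M ε L β x : ℝ) : ℝ :=
  min M (⨅ s : ℤ, ε * |(s : ℝ)| + L * ‖((x - s * β : ℝ) : UnitAddCircle)‖)

section OrbitPotential

variable {M ε L β : ℝ}

lemma orbitPotential_bddBelow (hε : 0 ≤ ε) (hL : 0 ≤ L) (x : ℝ) :
    BddBelow (Set.range fun s : ℤ => ε * |(s : ℝ)| + L * ‖((x - s * β : ℝ) : UnitAddCircle)‖) :=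
  ⟨0, by rintro _ ⟨s, rfl⟩; positivity⟩

lemma orbitPotential_le_add_of_forall (hε : 0 ≤ ε) (hL : 0 ≤ L) {x y c : ℝ} (hc : 0 ≤ c)
    (h : ∀ s : ℤ, ∃ s' : ℤ, ε * |(s' : ℝ)| + L * ‖((x - s' * β : ℝ) : UnitAddCircle)‖ ≤
      ε * |(s : ℝ)| + L * ‖((y - s * β : ℝ) : UnitAddCircle)‖ + c) :
    orbitPotential M ε L β x ≤ orbitPotential M ε L β y + c := by
  rw [orbitPotential, orbitPotential, ← min_add_add_right]
  refine min_le_min (le_add_of_nonneg_right hc) (sub_le_iff_le_add.mp (le_ciInf fun s => ?_))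
  obtain ⟨s', hs'⟩ := h s
  exact sub_le_iff_le_add.mpr ((ciInf_le (orbitPotential_bddBelow hε hL x) s').trans hs')

lemma orbitPotential_nonneg (hM : 0 ≤ M) (hε : 0 ≤ ε) (hL : 0 ≤ L) (x : ℝ) :
    0 ≤ orbitPotential M ε L β x :=
  le_min hM (le_ciInf fun _ => by positivity)

lemma orbitPotential_zero (hM : 0 ≤ M) (hε : 0 ≤ ε) (hL : 0 ≤ L) :
    orbitPotential M ε L β 0 = 0 := by
  refine le_antisymm ?_ (orbitPotential_nonneg hM hε hL 0)
  refine (min_le_right _ _).trans ((ciInf_le (orbitPotential_bddBelow hε hL 0) 0).trans ?_)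
  simp

lemma orbitPotential_periodic : Function.Periodic (orbitPotential M ε L β) 1 := by
  intro x
  simp only [orbitPotential, add_sub_right_comm x 1, AddCircle.coe_add_period]

lemma lipschitzWith_orbitPotential (hε : 0 ≤ ε) (hL : 0 ≤ L) :
    LipschitzWith L.toNNReal (orbitPotential M ε L β) := by
  refine LipschitzWith.of_le_add_mul' L fun x y =>
    orbitPotential_le_add_of_forall hε hL (by positivity) fun s => ⟨s, ?_⟩
  have h : ‖((x - s * β : ℝ) : UnitAddCircle)‖ ≤
      ‖((y - s * β : ℝ) : UnitAddCircle)‖ + dist x y := by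
    refine (norm_le_norm_add_norm_sub' _ ((y - s * β : ℝ) : UnitAddCircle)).trans ?_
    rw [← AddCircle.coe_sub, sub_sub_sub_cancel_right, Real.dist_eq]
    gcongr
    exact QuotientAddGroup.norm_mk_le_norm
  nlinarith

lemma orbitPotential_add_int_mul_le (hε : 0 ≤ ε) (hL : 0 ≤ L) (x : ℝ) (d : ℤ) :
    orbitPotential M ε L β (x + d * β) ≤ orbitPotential M ε L β x + ε * |(d : ℝ)| := by
  refine orbitPotential_le_add_of_forall hε hL (by positivity) fun s => ⟨s + d, ?_⟩
  have hs : |((s + d : ℤ) : ℝ)| ≤ |(s : ℝ)| + |(d : ℝ)| := by push_cast; exact abs_add_le _ _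
  have harg : x + d * β - ((s + d : ℤ) : ℝ) * β = x - s * β := by push_cast; ring
  rw [harg]
  nlinarith

lemma abs_orbitPotential_add_sub_le (hε : 0 ≤ ε) (hL : 0 ≤ L) (x : ℝ) :
    |orbitPotential M ε L β (x + β) - orbitPotential M ε L β x| ≤ ε := by
  have h₁ := orbitPotential_add_int_mul_le (M := M) (β := β) hε hL x 1
  have h₂ := orbitPotential_add_int_mul_le (M := M) (β := β) hε hL (x + β) (-1)
  simp only [Int.cast_one, Int.cast_neg, one_mul, neg_one_mul, abs_one, abs_neg, mul_one,
    add_neg_cancel_right] at h₁ h₂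
  rw [abs_sub_le_iff]
  constructor <;> linarith

lemma min_le_orbitPotential_nat_mul (hε : 0 ≤ ε) (hL : 0 ≤ L) {t T : ℕ} (ht : t ≤ T)
    (hMT : M ≤ ε * T)
    (hML : ∀ s : ℤ, s ≠ 0 → |s| ≤ 2 * T → M ≤ L * ‖((s * β : ℝ) : UnitAddCircle)‖) :
    min M (ε * t) ≤ orbitPotential M ε L β (t * β) := by
  refine le_min (min_le_left _ _) (le_ciInf fun s => ?_)
  have harg : (t : ℝ) * β - s * β = ((t - s : ℤ) : ℝ) * β := by push_cast; ring
  rw [harg]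
  rcases eq_or_ne s t with rfl | hst
  · simp
  rcases le_or_gt (T : ℤ) |s| with hs | hs
  · have : (T : ℝ) ≤ |(s : ℝ)| := by exact_mod_cast hs
    have : 0 ≤ L * ‖(((t - s : ℤ) : ℝ) * β : UnitAddCircle)‖ := by positivity
    nlinarith [min_le_left M (ε * t)]
  · have hts : |(t : ℤ) - s| ≤ 2 * T := (abs_sub _ _).trans (by rw [Nat.abs_cast]; omega)
    have := hML _ (sub_ne_zero.mpr hst.symm) hts
    have : 0 ≤ ε * |(s : ℝ)| := by positivity
    linarith [min_le_left M (ε * t)]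

end OrbitPotential

lemma integral_Icc_sub_comp_add_right {ψ : ℝ → ℝ} (hψ : Continuous ψ)
    (hper : Function.Periodic ψ 1) (β : ℝ) :
    ∫ u in Set.Icc (0 : ℝ) 1, (ψ (u + β) - ψ u) = 0 := by
  rw [integral_Icc_eq_integral_Ioc, ← intervalIntegral.integral_of_le zero_le_one,
    intervalIntegral.integral_sub ((by fun_prop : Continuous fun u => ψ (u + β)).intervalIntegrable
      _ _) (hψ.intervalIntegrable _ _),
    intervalIntegral.integral_comp_add_right ψ β, sub_eq_zero, zero_add, add_comm,
    hper.intervalIntegral_add_eq β 0, zero_add]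

lemma integral_Icc_pi_comp_eval {ι : Type*} [Fintype ι] {g : ℝ → ℝ} (hg : Continuous g) (i : ι) :
    ∫ x in Set.Icc (0 : ι → ℝ) 1, g (x i) = ∫ u in Set.Icc (0 : ℝ) 1, g u := by
  have : IsProbabilityMeasure (volume.restrict (Set.Icc (0 : ℝ) 1)) := ⟨by simp⟩
  rw [volume_pi, ← Set.pi_univ_Icc, Measure.restrict_pi_pi]
  exact integral_comp_eval hg.aestronglyMeasurable

noncomputable def coboundarySum (Ψ : ℕ → ℝ → ℝ) (β u : ℝ) : ℝ := ∑' j, (Ψ j (u + β) - Ψ j u)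

section CoboundarySum

variable {Ψ : ℕ → ℝ → ℝ} {E : ℕ → ℝ} {β : ℝ}

lemma hasSum_coboundarySum (hE : Summable E) (hΨE : ∀ j x, |Ψ j (x + β) - Ψ j x| ≤ E j)
    (u : ℝ) : HasSum (fun j => Ψ j (u + β) - Ψ j u) (coboundarySum Ψ β u) :=
  (hE.of_norm_bounded fun j => hΨE j u).hasSum

lemma continuous_coboundarySum (hE : Summable E) (hΨE : ∀ j x, |Ψ j (x + β) - Ψ j x| ≤ E j)
    (hΨ : ∀ j, Continuous (Ψ j)) : Continuous (coboundarySum Ψ β) := by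
  have hterm : ∀ j, Continuous fun u => Ψ j (u + β) - Ψ j u :=
    fun j => ((hΨ j).comp (continuous_add_const β)).sub (hΨ j)
  exact continuous_tsum hterm hE fun j x => hΨE j x

lemma abs_coboundarySum_le (hE : Summable E) (hΨE : ∀ j x, |Ψ j (x + β) - Ψ j x| ≤ E j)
    (u : ℝ) : |coboundarySum Ψ β u| ≤ ∑' j, E j :=
  (hasSum_coboundarySum hE hΨE u).norm_le_of_bounded hE.hasSum fun j => hΨE j u

lemma coboundarySum_periodic (hper : ∀ j, Function.Periodic (Ψ j) 1) :
    Function.Periodic (coboundarySum Ψ β) 1 := fun u => by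
  simp only [coboundarySum, add_right_comm u 1 β, hper _ _]

lemma integral_Icc_coboundarySum (hE : Summable E)
    (hΨE : ∀ j x, |Ψ j (x + β) - Ψ j x| ≤ E j) (hΨ : ∀ j, Continuous (Ψ j))
    (hper : ∀ j, Function.Periodic (Ψ j) 1) :
    ∫ u in Set.Icc (0 : ℝ) 1, coboundarySum Ψ β u = 0 := by
  refine (hasSum_integral_of_dominated_convergence (μ := volume.restrict (Set.Icc (0 : ℝ) 1))
    (F := fun j u => Ψ j (u + β) - Ψ j u) (fun j _ => E j) (fun j => by fun_prop)
    (fun j => .of_forall fun u => hΨE j u) (.of_forall fun _ => hE) (integrable_const _)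
    (.of_forall (hasSum_coboundarySum hE hΨE))).unique ?_
  simpa only [integral_Icc_sub_comp_add_right (hΨ _) (hper _)] using hasSum_zero

lemma hasSum_sum_range_coboundarySum (hE : Summable E)
    (hΨE : ∀ j x, |Ψ j (x + β) - Ψ j x| ≤ E j) (t : ℕ) :
    HasSum (fun j => Ψ j (t * β) - Ψ j 0) (∑ k ∈ range t, coboundarySum Ψ β (k * β)) := by
  have telescope : ∀ j,
      ∑ k ∈ range t, (Ψ j (k * β + β) - Ψ j (k * β)) = Ψ j (t * β) - Ψ j 0 :=
    fun j => by simpa [add_one_mul] using sum_range_sub (fun k : ℕ => Ψ j (k * β)) t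
  simpa only [telescope] using
    hasSum_sum (s := range t) fun k _ => hasSum_coboundarySum hE hΨE ((k : ℝ) * β)

end CoboundarySum

lemma irrational_apply_of_forall_int_relation {ι : Type*} [Fintype ι] {α : ι → ℝ}
    (hα : ∀ (m : ι → ℤ) (c : ℤ), (∑ i, (m i : ℝ) * α i) + (c : ℝ) = 0 → m = 0 ∧ c = 0)
    (i : ι) : Irrational (α i) := by
  classical
  rintro ⟨q, hq⟩
  have hrel : (∑ j, ((Pi.single i (q.den : ℤ) : ι → ℤ) j : ℝ) * α j) + ((-q.num : ℤ) : ℝ) = 0 := by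
    have : (q.den : ℝ) * q = q.num := by exact_mod_cast Rat.den_mul_eq_num q
    simp [Pi.single_apply, ← hq, this]
  simpa using congr_fun (hα _ _ hrel).1 i

lemma exists_le_mul_norm_int_mul {β : ℝ} (hβ : Irrational β) (M : ℝ) (N : ℤ) :
    ∃ L, 0 ≤ L ∧ ∀ s : ℤ, s ≠ 0 → |s| ≤ N → M ≤ L * ‖((s * β : ℝ) : UnitAddCircle)‖ := by
  have hpos : ∀ s : ℤ, s ≠ 0 → 0 < ‖((s * β : ℝ) : UnitAddCircle)‖ := fun s hs =>
    norm_pos_iff.mpr fun h => by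
      obtain ⟨m, hm⟩ := (AddCircle.coe_eq_zero_iff 1).mp h
      exact (hβ.intCast_mul hs).ne_int m (by simpa using hm.symm)
  have hL : ∀ᶠ L in atTop, ∀ s ∈ Icc (-N) N, s ≠ 0 →
      M ≤ L * ‖((s * β : ℝ) : UnitAddCircle)‖ := by
    refine (eventually_all_finset _).mpr fun s _ => ?_
    rcases eq_or_ne s 0 with rfl | hs
    · exact .of_forall fun _ h => absurd rfl h
    filter_upwards [eventually_ge_atTop (M / ‖((s * β : ℝ) : UnitAddCircle)‖)] with L hL _
    exact (div_le_iff₀ (hpos s hs)).mp hL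
  obtain ⟨L, hL0, hL⟩ := ((eventually_ge_atTop 0).and hL).exists
  exact ⟨L, hL0, fun s hs hsN => hL s (mem_Icc.mpr (abs_le.mp hsN)) hs⟩

lemma StrictMono.exists_le_lt_succ {a : ℕ → ℕ} (ha : StrictMono a) {t : ℕ} (ht : a 0 ≤ t) :
    ∃ J, a J ≤ t ∧ t < a (J + 1) := by
  classical
  have hex : ∃ J, t < a (J + 1) := ⟨t, (Nat.lt_succ_self t).trans_le (ha.id_le _)⟩
  refine ⟨Nat.find hex, ?_, Nat.find_spec hex⟩
  rcases Nat.eq_zero_or_eq_succ_pred (Nat.find hex) with h | h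
  · rwa [h]
  · rw [h]
    exact not_lt.mp (Nat.find_min hex (by omega))

theorem exists_continuous_periodic_sum_range_ge {β : ℝ} (hβ : Irrational β) {σ : ℕ → ℝ}
    (hσ : Antitone σ) (hσ0 : Tendsto σ atTop (nhds 0)) {C : ℝ} (hC : 0 < C) :
    ∃ F : ℝ → ℝ, Continuous F ∧ Function.Periodic F 1 ∧ ∫ u in Set.Icc (0 : ℝ) 1, F u = 0 ∧
      (∀ u, |F u| ≤ C) ∧ ∃ t₀ : ℕ, ∀ t ≥ t₀, (t : ℝ) * σ t ≤ ∑ k ∈ range t, F (k * β) := by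
  set E : ℕ → ℝ := fun j => C / 2 / 2 ^ j
  have hE0 : ∀ j, 0 ≤ E j := fun j => by positivity
  have hEC : HasSum E C := hasSum_geometric_two' C
  obtain ⟨a, ha, hσa⟩ := extraction_forall_of_eventually fun j =>
    hσ0.eventually (eventually_le_nhds (by positivity : 0 < E j))
  have hσ_nonneg : ∀ t, 0 ≤ σ t := hσ.le_of_tendsto hσ0
  set M : ℕ → ℝ := fun j => a (j + 1) * σ (a j)
  have hM : ∀ j, 0 ≤ M j := fun j => mul_nonneg (Nat.cast_nonneg _) (hσ_nonneg _)
  choose L hL0 hL using fun j => exists_le_mul_norm_int_mul hβ (M j) (2 * a (j + 1))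
  set Ψ : ℕ → ℝ → ℝ := fun j => orbitPotential (M j) (E j) (L j) β
  have hΨE : ∀ j x, |Ψ j (x + β) - Ψ j x| ≤ E j :=
    fun j => abs_orbitPotential_add_sub_le (hE0 j) (hL0 j)
  have hΨ : ∀ j, Continuous (Ψ j) :=
    fun j => (lipschitzWith_orbitPotential (hE0 j) (hL0 j)).continuous
  have hper : ∀ j, Function.Periodic (Ψ j) 1 := fun j => orbitPotential_periodic
  refine ⟨coboundarySum Ψ β, continuous_coboundarySum hEC.summable hΨE hΨ,
    coboundarySum_periodic hper, integral_Icc_coboundarySum hEC.summable hΨE hΨ hper,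
    fun u => hEC.tsum_eq ▸ abs_coboundarySum_le hEC.summable hΨE u, a 0, fun t ht => ?_⟩
  obtain ⟨J, hJt, htJ⟩ := ha.exists_le_lt_succ ht
  have hσt : σ t ≤ σ (a J) := hσ hJt
  have hsum := hasSum_sum_range_coboundarySum hEC.summable hΨE t
  simp only [Ψ, orbitPotential_zero (hM _) (hE0 _) (hL0 _), sub_zero] at hsum
  calc (t : ℝ) * σ t ≤ min (M J) (E J * t) := by
        refine le_min (mul_le_mul (by exact_mod_cast htJ.le) hσt (hσ_nonneg t) (by positivity)) ?_
        rw [mul_comm]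
        exact mul_le_mul_of_nonneg_right (hσt.trans (hσa J)) (by positivity)
    _ ≤ Ψ J (t * β) := min_le_orbitPotential_nat_mul (hE0 J) (hL0 J) htJ.le
        (by rw [mul_comm]; exact mul_le_mul_of_nonneg_left (hσa J) (by positivity)) (hL J)
    _ ≤ ∑ k ∈ range t, coboundarySum Ψ β (k * β) :=
        le_hasSum hsum J fun j _ => orbitPotential_nonneg (hM j) (hE0 j) (hL0 j) _

theorem stmt_6_general {n : ℕ} (hn : 1 ≤ n) (α : Fin n → ℝ)
    (hirr : ∀ (m : Fin n → ℤ) (c : ℤ),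
      (∑ i, (m i : ℝ) * α i) + (c : ℝ) = 0 → m = 0 ∧ c = 0)
    (σ : ℕ → ℝ) (hσanti : Antitone σ)
    (hσ0 : Filter.Tendsto σ Filter.atTop (nhds 0)) :
    ∃ f : (Fin n → ℝ) → ℝ, Continuous f ∧
      (∀ (x : Fin n → ℝ) (v : Fin n → ℤ), f (x + fun i => (v i : ℝ)) = f x) ∧
      (∫ x in Set.Icc (0 : Fin n → ℝ) 1, f x) = 0 ∧
      (∀ x, |f x| ≤ Real.pi) ∧
      ∃ t₀ : ℕ, ∀ t ≥ t₀,
        (t : ℝ) * σ t ≤ ∑ k ∈ Finset.range t, f (fun i => (k : ℝ) * α i) := by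
  set i₀ : Fin n := ⟨0, hn⟩
  obtain ⟨F, hF, hFper, hFint, hFπ, t₀, hFsum⟩ := exists_continuous_periodic_sum_range_ge
    (irrational_apply_of_forall_int_relation hirr i₀) hσanti hσ0 Real.pi_pos
  refine ⟨fun x => F (x i₀), by fun_prop, fun x v => ?_,
    (integral_Icc_pi_comp_eval hF i₀).trans hFint, fun x => hFπ _, t₀, hFsum⟩
  simpa using hFper.int_mul (v i₀) (x i₀)

theorem stmt_6 {n : ℕ} (hn : 1 ≤ n) (α : Fin n → ℝ)
    (hirr : ∀ (m : Fin n → ℤ) (c : ℤ),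
      (∑ i, (m i : ℝ) * α i) + (c : ℝ) = 0 → m = 0 ∧ c = 0)
    (σ : ℕ → ℝ) (hσpos : ∀ t, 0 < σ t) (hσanti : Antitone σ)
    (hσ0 : Filter.Tendsto σ Filter.atTop (nhds 0)) :
    ∃ f : (Fin n → ℝ) → ℝ, Continuous f ∧
      (∀ (x : Fin n → ℝ) (v : Fin n → ℤ), f (x + fun i => (v i : ℝ)) = f x) ∧
      (∫ x in Set.Icc (0 : Fin n → ℝ) 1, f x) = 0 ∧
      (∀ x, |f x| ≤ Real.pi) ∧
      ∃ t₀ : ℕ, ∀ t ≥ t₀,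
        (t : ℝ) * σ t ≤ ∑ k ∈ Finset.range t, f (fun i => (k : ℝ) * α i) :=
  stmt_6_general hn α hirr σ hσanti hσ0
end

section
/- Let f : ℝⁿ → ℝ be continuous, 1-periodic in each variable, with zero mean value and |f| ≤ M. Let J = [β₁,γ₁] × … × [β_n,γ_n] ⊆ [0,1)ⁿ. Then for every positive integer t, |∫_J ∑_{k=1}^t f(kx) dx| ≤ M·n·(1 + log t). -/
/-!
Substituting `y = k x` turns `∫_J f(kx) dx` into `k⁻ⁿ ∫_{kJ} f`, where the box `kJ` has sides
`dᵢ ≤ k`. Shortening each side of a box to its integer part `⌊dᵢ⌋` leaves a box that is a disjoint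
union of translates of the unit cube; each of these is a fundamental domain of `ℤⁿ`, over which
`f` has integral zero. The rest of the box has volume `∏ dᵢ - ∏ ⌊dᵢ⌋ ≤ n kⁿ⁻¹`, so
`|∫_J f(kx) dx| ≤ M n / k`, and summing over `k ≤ t` gives `M n H_t ≤ M n (1 + log t)`.
-/

open MeasureTheory Set Pointwise

theorem Finset.prod_sub_prod_le_card_mul_pow {ι R : Type*} [CommRing R] [LinearOrder R]
    [IsStrictOrderedRing R] {s : Finset ι} {d e : ι → R} {K : R}
    (he : ∀ i ∈ s, 0 ≤ e i) (hed : ∀ i ∈ s, e i ≤ d i) (hdK : ∀ i ∈ s, d i ≤ K)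
    (hde : ∀ i ∈ s, d i - e i ≤ 1) :
    ∏ i ∈ s, d i - ∏ i ∈ s, e i ≤ s.card * K ^ (s.card - 1) := by
  classical
  induction s using Finset.induction_on with
  | empty => simp
  | insert j s hj ih =>
    simp only [Finset.forall_mem_insert] at he hed hdK hde
    have hd : ∏ i ∈ s, d i ≤ K ^ s.card :=
      (Finset.prod_le_prod (fun i hi => (he.2 i hi).trans (hed.2 i hi)) hdK.2).trans_eq
        (Finset.prod_const K)
    have he_d : ∏ i ∈ s, e i ≤ ∏ i ∈ s, d i := Finset.prod_le_prod he.2 hed.2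
    have he0 : 0 ≤ ∏ i ∈ s, e i := Finset.prod_nonneg he.2
    have hK : K * (s.card * K ^ (s.card - 1)) = s.card * K ^ s.card := by
      rcases Nat.eq_zero_or_pos s.card with h | h
      · simp [h]
      · rw [mul_left_comm, ← pow_succ', Nat.sub_add_cancel h]
    rw [Finset.prod_insert hj, Finset.prod_insert hj, Finset.card_insert_of_notMem hj,
      Nat.add_sub_cancel, Nat.cast_succ]
    calc d j * ∏ i ∈ s, d i - e j * ∏ i ∈ s, e i
        = (d j - e j) * ∏ i ∈ s, d i + e j * (∏ i ∈ s, d i - ∏ i ∈ s, e i) := by ring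
      _ ≤ 1 * K ^ s.card + K * (s.card * K ^ (s.card - 1)) := by
        refine add_le_add (mul_le_mul hde.1 hd (he0.trans he_d) zero_le_one)
          (mul_le_mul (hed.1.trans hdK.1) (ih he.2 hed.2 hdK.2 hde.2) (sub_nonneg.2 he_d)
            (he.1.trans (hed.1.trans hdK.1)))
      _ = (s.card + 1) * K ^ s.card := by rw [hK]; ring

variable {ι : Type*}

theorem pi_Ico_add_one_eq_vadd (c : ι → ℝ) :
    pi univ (fun i => Ico (c i) (c i + 1)) = c +ᵥ pi univ fun _ => Ico (0 : ℝ) 1 := by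
  ext x
  simp [mem_vadd_set_iff_neg_vadd_mem, add_comm]

theorem smul_Icc_pi {R : ℝ} (hR : 0 < R) (a b : ι → ℝ) : R • Icc a b = Icc (R • a) (R • b) := by
  rw [← pi_univ_Icc, ← pi_univ_Icc, smul_set_pi₀ hR.ne']
  congr 1
  ext1 i
  exact LinearOrderedField.smul_Icc hR

variable [Fintype ι] {f : (ι → ℝ) → ℝ}

theorem setIntegral_pi_Ico_add_one
    (hper : ∀ (x : ι → ℝ) (v : ι → ℤ), f (x + fun i => (v i : ℝ)) = f x) (c : ι → ℝ) :
    ∫ x in pi univ (fun i => Ico (c i) (c i + 1)), f x =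
      ∫ x in pi univ (fun _ => Ico (0 : ℝ) 1), f x := by
  have : Countable (Submodule.span ℤ (range (Pi.basisFun ℝ ι))).toAddSubgroup :=
    inferInstanceAs (Countable (Submodule.span ℤ (range (Pi.basisFun ℝ ι))))
  have hF := ZSpan.isAddFundamentalDomain' (Pi.basisFun ℝ ι) volume
  rw [ZSpan.fundamentalDomain_pi_basisFun] at hF
  rw [pi_Ico_add_one_eq_vadd]
  refine (hF.vadd_of_comm c).setIntegral_eq hF fun g x => ?_
  obtain ⟨v, hv⟩ : ∃ v : ι → ℤ, (g : ι → ℝ) = fun i => (v i : ℝ) := by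
    choose v hv using ((Pi.basisFun ℝ ι).mem_span_iff_repr_mem ℤ g).mp g.2
    exact ⟨v, funext fun i => (hv i).symm⟩
  rw [Submodule.vadd_def, vadd_eq_add, add_comm, hv, hper]

theorem pi_Ico_add_natCast_eq_biUnion [DecidableEq ι] (a : ι → ℝ) (m : ι → ℕ) :
    pi univ (fun i => Ico (a i) (a i + m i)) =
      ⋃ v ∈ Fintype.piFinset fun i => Finset.range (m i),
        pi univ fun i => Ico (a i + v i) (a i + v i + 1) := by
  ext x
  simp only [mem_pi, mem_univ, forall_const, mem_Ico, mem_iUnion, Fintype.mem_piFinset,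
    Finset.mem_range, exists_prop]
  constructor
  · intro hx
    refine ⟨fun i => ⌊x i - a i⌋₊, fun i => ?_, fun i => ?_⟩
    · exact (Nat.floor_lt (by linarith [hx i])).2 (by linarith [hx i])
    · constructor
      · linarith [Nat.floor_le (by linarith [hx i] : 0 ≤ x i - a i)]
      · linarith [Nat.lt_floor_add_one (x i - a i)]
  · rintro ⟨v, hvm, hx⟩ i
    have : (v i : ℝ) + 1 ≤ m i := by exact_mod_cast hvm i
    constructor <;> linarith [hx i, (Nat.cast_nonneg (v i) : (0 : ℝ) ≤ v i)]

theorem integrableOn_pi_Ico (hf : Continuous f) (a b : ι → ℝ) :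
    IntegrableOn f (pi univ fun i => Ico (a i) (b i)) :=
  (hf.continuousOn.integrableOn_compact isCompact_Icc).mono_set
    ((pi_mono fun _ _ => Ico_subset_Icc_self).trans (pi_univ_Icc a b).subset)

theorem pi_univ_Ico_ae_eq_Icc (a b : ι → ℝ) :
    pi univ (fun i => Ico (a i) (b i)) =ᵐ[volume] Icc a b :=
  Measure.univ_pi_Ico_ae_eq_Icc

theorem setIntegral_pi_Ico_add_natCast_eq_zero (hf : Continuous f)
    (hper : ∀ (x : ι → ℝ) (v : ι → ℤ), f (x + fun i => (v i : ℝ)) = f x)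
    (hmean : ∫ x in Icc 0 1, f x = 0) (a : ι → ℝ) (m : ι → ℕ) :
    ∫ x in pi univ (fun i => Ico (a i) (a i + m i)), f x = 0 := by
  classical
  rw [← setIntegral_congr_set (pi_univ_Ico_ae_eq_Icc 0 1)] at hmean
  rw [pi_Ico_add_natCast_eq_biUnion, integral_biUnion_finset]
  · exact Finset.sum_eq_zero fun v _ => (setIntegral_pi_Ico_add_one hper _).trans hmean
  · exact fun v _ => MeasurableSet.univ_pi fun _ => measurableSet_Ico
  · intro v _ w _ hvw
    obtain ⟨i, hi⟩ := Function.ne_iff.mp hvw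
    refine disjoint_left.2 fun x hv hw => hi ?_
    have h1 := hv i (mem_univ i)
    have h2 := hw i (mem_univ i)
    simp only [mem_Ico] at h1 h2
    have hvw : (v i : ℝ) < w i + 1 := by linarith
    have hwv : (w i : ℝ) < v i + 1 := by linarith
    norm_cast at hvw hwv
    omega
  · exact fun v _ => integrableOn_pi_Ico hf _ _

theorem abs_setIntegral_pi_Ico_le (hf : Continuous f)
    (hper : ∀ (x : ι → ℝ) (v : ι → ℤ), f (x + fun i => (v i : ℝ)) = f x)
    (hmean : ∫ x in Icc 0 1, f x = 0) {M K : ℝ} (hbound : ∀ x, |f x| ≤ M)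
    {a b : ι → ℝ} (hab : a ≤ b) (hK : ∀ i, b i - a i ≤ K) :
    |∫ x in pi univ (fun i => Ico (a i) (b i)), f x| ≤
      M * (Fintype.card ι * K ^ (Fintype.card ι - 1)) := by
  set m : ι → ℕ := fun i => ⌊b i - a i⌋₊
  have hm : ∀ i, (m i : ℝ) ≤ b i - a i := fun i => Nat.floor_le (sub_nonneg.2 (hab i))
  have hsub : pi univ (fun i => Ico (a i) (a i + m i)) ⊆ pi univ fun i => Ico (a i) (b i) :=
    pi_mono fun i _ => Ico_subset_Ico_right (by linarith [hm i])
  have hint := integrableOn_pi_Ico hf a b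
  rw [← integral_inter_add_sdiff (MeasurableSet.univ_pi fun _ => measurableSet_Ico) hint,
    inter_eq_right.2 hsub, setIntegral_pi_Ico_add_natCast_eq_zero hf hper hmean, zero_add,
    ← Real.norm_eq_abs]
  have hfin : volume (pi univ fun i => Ico (a i) (b i)) < ⊤ := by
    rw [Real.volume_pi_Ico]; exact ENNReal.prod_lt_top fun _ _ => ENNReal.ofReal_lt_top
  refine (norm_setIntegral_le_of_norm_le_const ((measure_mono sdiff_subset).trans_lt hfin)
    fun x _ => hbound x).trans ?_
  rw [measureReal_sdiff hsub (MeasurableSet.univ_pi fun _ => measurableSet_Ico) hfin.ne,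
    measureReal_def, measureReal_def, Real.volume_pi_Ico_toReal hab,
    Real.volume_pi_Ico_toReal fun i => le_add_of_nonneg_right (Nat.cast_nonneg (m i))]
  simp only [add_sub_cancel_left]
  gcongr
  · exact (abs_nonneg _).trans (hbound 0)
  · exact Finset.prod_sub_prod_le_card_mul_pow (fun _ _ => Nat.cast_nonneg _) (fun i _ => hm i)
      (fun i _ => hK i) fun i _ => by linarith [Nat.sub_one_lt_floor (b i - a i)]

theorem abs_setIntegral_Icc_comp_smul_le (hf : Continuous f)
    (hper : ∀ (x : ι → ℝ) (v : ι → ℤ), f (x + fun i => (v i : ℝ)) = f x)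
    (hmean : ∫ x in Icc 0 1, f x = 0) {M : ℝ} (hbound : ∀ x, |f x| ≤ M)
    {β γ : ι → ℝ} (hβγ : β ≤ γ) (hlen : ∀ i, γ i - β i ≤ 1) {R : ℝ} (hR : 0 < R) :
    |∫ x in Icc β γ, f (R • x)| ≤ M * Fintype.card ι / R := by
  rw [Measure.setIntegral_comp_smul_of_pos volume f _ hR, Module.finrank_fintype_fun_eq_card,
    smul_Icc_pi hR, ← setIntegral_congr_set (pi_univ_Ico_ae_eq_Icc _ _), smul_eq_mul, abs_mul,
    abs_inv, abs_pow, abs_of_pos hR]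
  have hbox := abs_setIntegral_pi_Ico_le hf hper hmean hbound (a := R • β) (b := R • γ) (K := R)
    (smul_le_smul_of_nonneg_left hβγ hR.le) fun i => by
      simpa [← mul_sub] using mul_le_mul_of_nonneg_left (hlen i) hR.le
  calc (R ^ Fintype.card ι)⁻¹ * |∫ x in pi univ fun i => Ico ((R • β) i) ((R • γ) i), f x|
      ≤ (R ^ Fintype.card ι)⁻¹ * (M * (Fintype.card ι * R ^ (Fintype.card ι - 1))) :=
        mul_le_mul_of_nonneg_left hbox (by positivity)
    _ = M * Fintype.card ι / R := by
        generalize Fintype.card ι = c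
        cases c with
        | zero => simp
        | succ c => rw [Nat.add_sub_cancel, pow_succ]; field_simp

theorem stmt_9_general {n : ℕ} (f : (Fin n → ℝ) → ℝ) (M : ℝ)
    (hf : Continuous f)
    (hper : ∀ (x : Fin n → ℝ) (v : Fin n → ℤ), f (x + fun i => (v i : ℝ)) = f x)
    (hmean : (∫ x in Set.Icc (0 : Fin n → ℝ) 1, f x) = 0)
    (hbound : ∀ x, |f x| ≤ M)
    (β γ : Fin n → ℝ) (hβ : ∀ i, 0 ≤ β i) (hβγ : ∀ i, β i ≤ γ i) (hγ : ∀ i, γ i < 1)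
    (t : ℕ) :
    |∫ x in Set.Icc β γ, ∑ k ∈ Finset.Icc 1 t, f (fun i => (k : ℝ) * x i)| ≤
      M * n * (1 + Real.log t) := by
  have hlen (i : Fin n) : γ i - β i ≤ 1 := by linarith [hβ i, hγ i]
  have hterm : ∀ k ∈ Finset.Icc 1 t,
      |∫ x in Set.Icc β γ, f (fun i => (k : ℝ) * x i)| ≤ M * n / k := fun k hk => by
    have h := abs_setIntegral_Icc_comp_smul_le hf hper hmean hbound hβγ hlen (R := k)
      (by exact_mod_cast (Finset.mem_Icc.mp hk).1)
    rwa [Fintype.card_fin] at h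
  have hint (k : ℕ) : IntegrableOn (fun x : Fin n → ℝ => f (fun i => (k : ℝ) * x i))
      (Set.Icc β γ) :=
    (hf.comp (continuous_const_smul (k : ℝ))).continuousOn.integrableOn_compact isCompact_Icc
  rw [integral_finsetSum _ fun k _ => hint k]
  calc |∑ k ∈ Finset.Icc 1 t, ∫ x in Set.Icc β γ, f (fun i => (k : ℝ) * x i)|
      ≤ ∑ k ∈ Finset.Icc 1 t, M * n / k :=
        (Finset.abs_sum_le_sum_abs _ _).trans (Finset.sum_le_sum hterm)
    _ = M * n * harmonic t := by
        simp [harmonic_eq_sum_Icc, Finset.mul_sum, div_eq_mul_inv]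
    _ ≤ M * n * (1 + Real.log t) := by
        have hM : 0 ≤ M := (abs_nonneg _).trans (hbound 0)
        gcongr
        exact harmonic_le_one_add_log t

theorem stmt_9 {n : ℕ} (hn : 1 ≤ n) (f : (Fin n → ℝ) → ℝ) (M : ℝ)
    (hf : Continuous f)
    (hper : ∀ (x : Fin n → ℝ) (v : Fin n → ℤ), f (x + fun i => (v i : ℝ)) = f x)
    (hmean : (∫ x in Set.Icc (0 : Fin n → ℝ) 1, f x) = 0)
    (hbound : ∀ x, |f x| ≤ M)
    (β γ : Fin n → ℝ) (hβ : ∀ i, 0 ≤ β i) (hβγ : ∀ i, β i ≤ γ i) (hγ : ∀ i, γ i < 1)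
    (t : ℕ) (ht : 0 < t) :
    |∫ x in Set.Icc β γ, ∑ k ∈ Finset.Icc 1 t, f (fun i => (k : ℝ) * x i)| ≤
      M * n * (1 + Real.log t) :=
  stmt_9_general f M hf hper hmean hbound β γ hβ hβγ hγ t
end

section
/- Let f : ℝ → ℝ be continuous, 1-periodic, with ∫₀¹ f = 0 and |f| ≤ M. Let a, q be positive integers with gcd(a,q) = gcd(a+1,q) = 1. Then for every positive integer t, |∫_{a/q}^{(a+1)/q} ∑_{k=1}^t f(kx) dx| ≤ M(q−1). -/
/-!
Let `h(z) = ∫₀^z f`. The `k`-th integral is `(h((a+1)k/q) - h(ak/q)) / k`. Since `∫₀¹ f = 0`, `h`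
is `1`-periodic, so the numerator `g(k)` depends only on `k mod q`, and `|g| ≤ M` because it is an
integral of `f` over an interval inside `[0,1]`. As `a` and `a+1` are units mod `q`, the
multiplications by `a` and `a+1` permute the residues, so `g` sums to zero over every complete
residue system. Hence the partial sums of `g` only see an incomplete block of at most `q - 1` terms
and are bounded by `M(q-1)`, and Abel summation against the decreasing weights `1/k` gives the
bound.
-/

open MeasureTheory Finset

theorem Function.Periodic.periodic_primitive {E : Type*} [NormedAddCommGroup E] [NormedSpace ℝ E]
    {f : ℝ → E} {T : ℝ} (hf : Function.Periodic f T)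
    (h_int : ∀ t₁ t₂, IntervalIntegrable f volume t₁ t₂) (hmean : ∫ x in (0 : ℝ)..T, f x = 0) :
    Function.Periodic (fun z => ∫ x in (0 : ℝ)..z, f x) T := fun z => by
  simp only [hf.intervalIntegral_add_eq_add 0 z h_int, zero_add, hmean, add_zero]

theorem Function.Periodic.apply_natCast_div_eq {α : Type*} {h : ℝ → α}
    (hh : Function.Periodic h 1) (q n : ℕ) : h (n / q) = h (((n : ZMod q).val : ℝ) / q) := by
  have hsplit : (n : ℝ) / q = ((n % q : ℕ) : ℝ) / q + (n / q : ℕ) := by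
    rcases Nat.eq_zero_or_pos q with rfl | hq
    · simp
    · rw [div_add' _ _ _ (by positivity), ← Nat.cast_mul, ← Nat.cast_add, Nat.mod_add_div']
  rw [hsplit, ZMod.val_natCast]
  simpa using hh.nat_mul (n / q) ((n % q : ℕ) / q)

theorem intervalIntegral.integral_comp_mul_left_eq_sub {f : ℝ → ℝ} (hf : Continuous f) {k : ℝ}
    (hk : k ≠ 0) (u v : ℝ) :
    ∫ x in u..v, f (k * x) = k⁻¹ * ((∫ x in (0 : ℝ)..k * v, f x) - ∫ x in (0 : ℝ)..k * u, f x) := by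
  rw [integral_comp_mul_left f hk, smul_eq_mul,
    integral_interval_sub_left (hf.intervalIntegrable _ _) (hf.intervalIntegrable _ _)]

theorem intervalIntegral.norm_integral_le_of_mem_Icc_zero_one {E : Type*} [NormedAddCommGroup E]
    [NormedSpace ℝ E] {f : ℝ → E} {M : ℝ} (hf : ∀ x, ‖f x‖ ≤ M) {u v : ℝ}
    (hu : u ∈ Set.Icc (0 : ℝ) 1) (hv : v ∈ Set.Icc (0 : ℝ) 1) : ‖∫ x in u..v, f x‖ ≤ M :=
  calc ‖∫ x in u..v, f x‖ ≤ M * |v - u| := norm_integral_le_of_norm_le_const fun x _ => hf x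
    _ ≤ M * 1 := by
        gcongr
        · exact (norm_nonneg _).trans (hf 0)
        · exact Real.dist_le_of_mem_Icc_01 hv hu
    _ = M := mul_one M

namespace ZMod

theorem val_div_mem_Icc {q : ℕ} [NeZero q] (r : ZMod q) :
    (r.val : ℝ) / q ∈ Set.Icc (0 : ℝ) 1 :=
  ⟨by positivity, div_le_one_of_le₀ (by exact_mod_cast r.val_lt.le) (Nat.cast_nonneg q)⟩

theorem sum_natCast_mul_of_coprime {M : Type*} [AddCommMonoid M] {q : ℕ} [NeZero q]
    (g : ZMod q → M) {b : ℕ} (hb : Nat.Coprime b q) : ∑ r, g (b * r) = ∑ r, g r := by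
  simpa using Equiv.sum_comp (Units.mulLeft (unitOfCoprime b hb)) g

theorem sum_range_natCast_add {M : Type*} [AddCommMonoid M] {q : ℕ} [NeZero q]
    (g : ZMod q → M) (c : ZMod q) : ∑ k ∈ range q, g (c + k) = ∑ r, g r := by
  rw [← Equiv.sum_comp (Equiv.addLeft c) g]
  refine sum_nbij' (fun k => (k : ZMod q)) val (fun _ _ => mem_univ _)
    (fun r _ => mem_range.2 r.val_lt) (fun k hk => val_cast_of_lt (mem_range.1 hk))
    (fun r _ => natCast_zmod_val r) (fun _ _ => rfl)

theorem norm_sum_range_natCast_add_le {E : Type*} [SeminormedAddCommGroup E] {q : ℕ}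
    [NeZero q] {g : ZMod q → E} {M : ℝ} (hsum : ∑ r, g r = 0) (hg : ∀ r, ‖g r‖ ≤ M)
    (c : ZMod q) (n : ℕ) : ‖∑ k ∈ range n, g (c + k)‖ ≤ (q - 1) * M := by
  induction n using Nat.strong_induction_on with
  | _ n ih =>
    rcases lt_or_ge n q with hn | hn
    · calc ‖∑ k ∈ range n, g (c + k)‖ ≤ n * M := by
            simpa using norm_sum_le_of_le (range n) fun k _ => hg (c + k)
        _ ≤ (q - 1) * M := by
            have : (n : ℝ) ≤ q - 1 := by
              rw [le_sub_iff_add_le]; exact_mod_cast hn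
            exact mul_le_mul_of_nonneg_right this ((norm_nonneg _).trans (hg 0))
    · have hblock : ∑ k ∈ range q, g (c + ((n - q + k : ℕ) : ZMod q)) = 0 := by
        simpa only [Nat.cast_add, ← add_assoc] using
          (sum_range_natCast_add g (c + (n - q : ℕ))).trans hsum
      rw [← Nat.sub_add_cancel hn, sum_range_add, hblock, add_zero]
      exact ih _ (Nat.sub_lt (NeZero.pos q |>.trans_le hn) (NeZero.pos q))

end ZMod

theorem norm_sum_range_smul_le_of_antitone {E : Type*} [SeminormedAddCommGroup E]
    [NormedSpace ℝ E] {c : ℕ → ℝ} {b : ℕ → E} {B : ℝ} (hc : Antitone c)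
    (hc_nonneg : ∀ i, 0 ≤ c i) (hb : ∀ n, ‖∑ i ∈ range n, b i‖ ≤ B) (t : ℕ) :
    ‖∑ i ∈ range t, c i • b i‖ ≤ c 0 * B := by
  rcases Nat.eq_zero_or_pos t with rfl | ht
  · simpa using mul_nonneg (hc_nonneg 0) ((norm_nonneg _).trans (hb 0))
  set S := fun n => ∑ i ∈ range n, b i
  have hstep : ∀ i, ‖(c (i + 1) - c i) • S (i + 1)‖ ≤ (c i - c (i + 1)) * B := fun i => by
    rw [norm_smul, Real.norm_eq_abs, abs_sub_comm, abs_of_nonneg (sub_nonneg.2 (hc i.le_succ))]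
    exact mul_le_mul_of_nonneg_left (hb _) (sub_nonneg.2 (hc i.le_succ))
  calc ‖∑ i ∈ range t, c i • b i‖
      = ‖c (t - 1) • S t - ∑ i ∈ range (t - 1), (c (i + 1) - c i) • S (i + 1)‖ := by
        rw [sum_range_by_parts]
    _ ≤ c (t - 1) * B + ∑ i ∈ range (t - 1), (c i - c (i + 1)) * B := by
        refine (norm_sub_le _ _).trans
          (add_le_add ?_ ((norm_sum_le _ _).trans (sum_le_sum fun i _ => hstep i)))
        rw [norm_smul, Real.norm_of_nonneg (hc_nonneg _)]
        exact mul_le_mul_of_nonneg_left (hb t) (hc_nonneg _)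
    _ = c 0 * B := by
        rw [← sum_mul, sum_range_sub' c]; ring

/-- The numerator `h((a+1)k/q) - h(ak/q)` of the `k`-th integral, as a function of `k mod q`. -/
noncomputable def residueIncrement {E : Type*} [Sub E] (h : ℝ → E) (a q : ℕ) (r : ZMod q) : E :=
  h (((((a + 1 : ℕ) : ZMod q) * r).val : ℝ) / q) - h ((((a : ZMod q) * r).val : ℝ) / q)

section residueIncrement

variable {E : Type*} {a q : ℕ}

theorem residueIncrement_natCast [AddGroup E] {h : ℝ → E} (hh : Function.Periodic h 1) (k : ℕ) :
    residueIncrement h a q k = h (k * ((a + 1) / q)) - h (k * (a / q)) := by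
  have hval : ∀ b : ℕ, h (k * (b / q)) = h ((((b : ZMod q) * k).val : ℝ) / q) := fun b => by
    rw [← Nat.cast_mul, ← hh.apply_natCast_div_eq q]
    push_cast
    ring_nf
  rw [← Nat.cast_succ, hval, hval, residueIncrement]

theorem sum_residueIncrement_eq_zero [AddCommGroup E] [NeZero q] (h : ℝ → E)
    (ha : Nat.Coprime a q) (ha' : Nat.Coprime (a + 1) q) : ∑ r, residueIncrement h a q r = 0 := by
  simp only [residueIncrement, sum_sub_distrib]
  rw [ZMod.sum_natCast_mul_of_coprime (fun r => h ((r.val : ℝ) / q)) ha,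
    ZMod.sum_natCast_mul_of_coprime (fun r => h ((r.val : ℝ) / q)) ha', sub_self]

theorem norm_residueIncrement_primitive_le [NormedAddCommGroup E] [NormedSpace ℝ E] [NeZero q]
    {f : ℝ → E} {M : ℝ} (h_int : ∀ u v, IntervalIntegrable f volume u v) (hf : ∀ x, ‖f x‖ ≤ M)
    (r : ZMod q) : ‖residueIncrement (fun z => ∫ x in (0 : ℝ)..z, f x) a q r‖ ≤ M := by
  rw [residueIncrement, intervalIntegral.integral_interval_sub_left (h_int _ _) (h_int _ _)]
  exact intervalIntegral.norm_integral_le_of_mem_Icc_zero_one hf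
    (ZMod.val_div_mem_Icc _) (ZMod.val_div_mem_Icc _)

end residueIncrement

theorem stmt_10_general (f : ℝ → ℝ) (M : ℝ) (hf : Continuous f)
    (hper : Function.Periodic f 1)
    (hmean : (∫ x in (0:ℝ)..1, f x) = 0)
    (hbound : ∀ x, |f x| ≤ M)
    (a q : ℕ) (hq : 0 < q)
    (hgcd : Nat.gcd a q = 1) (hgcd' : Nat.gcd (a + 1) q = 1)
    (t : ℕ) :
    |∫ x in ((a : ℝ)/q)..(((a : ℝ) + 1)/q), ∑ k ∈ Finset.Icc 1 t, f ((k : ℝ) * x)| ≤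
      M * (q - 1) := by
  have : NeZero q := ⟨hq.ne'⟩
  have h_int : ∀ u v, IntervalIntegrable f volume u v := fun u v => hf.intervalIntegrable u v
  set g := residueIncrement (fun z => ∫ x in (0 : ℝ)..z, f x) a q
  have hterm : ∀ k ∈ Icc 1 t,
      ∫ x in (a : ℝ) / q..((a : ℝ) + 1) / q, f ((k : ℝ) * x) = (k : ℝ)⁻¹ * g k := by
    intro k hk
    have hk : (k : ℝ) ≠ 0 := by have := (mem_Icc.1 hk).1; positivity
    rw [intervalIntegral.integral_comp_mul_left_eq_sub hf hk]
    exact congrArg _ (residueIncrement_natCast (hper.periodic_primitive h_int hmean) k).symm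
  have hweight : Antitone fun i : ℕ => (1 + (i : ℝ))⁻¹ := fun i j hij => by
    dsimp only
    gcongr
  calc |∫ x in (a : ℝ) / q..((a : ℝ) + 1) / q, ∑ k ∈ Icc 1 t, f ((k : ℝ) * x)|
      = ‖∑ i ∈ range t, (1 + (i : ℝ))⁻¹ • g (1 + i)‖ := by
        rw [intervalIntegral.integral_finsetSum fun (k : ℕ) _ =>
            (by fun_prop : Continuous fun x => f ((k : ℝ) * x)).intervalIntegrable _ _,
          sum_congr rfl hterm, Real.norm_eq_abs, ← Ico_add_one_right_eq_Icc,
          sum_Ico_eq_sum_range]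
        simp
    _ ≤ (1 + ((0 : ℕ) : ℝ))⁻¹ * ((q - 1) * M) :=
        norm_sum_range_smul_le_of_antitone hweight (fun i => by positivity)
          (ZMod.norm_sum_range_natCast_add_le (sum_residueIncrement_eq_zero _ hgcd hgcd')
            (norm_residueIncrement_primitive_le h_int hbound) 1) t
    _ = M * (q - 1) := by simp [mul_comm]

theorem stmt_10 (f : ℝ → ℝ) (M : ℝ) (hf : Continuous f)
    (hper : Function.Periodic f 1)
    (hmean : (∫ x in (0:ℝ)..1, f x) = 0)
    (hbound : ∀ x, |f x| ≤ M)
    (a q : ℕ) (ha : 0 < a) (hq : 0 < q)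
    (hgcd : Nat.gcd a q = 1) (hgcd' : Nat.gcd (a + 1) q = 1)
    (t : ℕ) (ht : 0 < t) :
    |∫ x in ((a : ℝ)/q)..(((a : ℝ) + 1)/q), ∑ k ∈ Finset.Icc 1 t, f ((k : ℝ) * x)| ≤
      M * (q - 1) :=
  stmt_10_general f M hf hper hmean hbound a q hq hgcd hgcd' t
end

section
/- For n ≥ 2 and each τ ≥ n, define G(τ) as the unique root x ≥ 1 of the polynomial x^{n−1} + x^{n−2} + … + x + 1 − τ. Then max_{τ ≥ n} τ·(2 − G(τ)) = max_{t ∈ (1,2)} (1 + t + t² + … + t^{n−1})(2 − t), and this maximum is at least (2/(n−1))·(2ⁿ(1 − 1/(n+1))ⁿ − 1). -/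
/-!
`G` inverts the strictly increasing map `t ↦ 1 + t + ⋯ + t^(n-1)` on `[1, ∞)`, so the substitution
`τ = 1 + t + ⋯ + t^(n-1)` identifies the two families of values. For `t ≥ 2` the factor `2 - t` is
nonpositive, so by continuity the supremum over `[1, ∞)` is already the supremum over `(1, 2)`.
The lower bound is the value at `t = 2n/(n+1)`.
-/

open Finset

lemma natCast_le_geom_sum {n : ℕ} {t : ℝ} (ht : 1 ≤ t) : (n : ℝ) ≤ ∑ i ∈ range n, t ^ i := by
  simpa using card_nsmul_le_sum (range n) (t ^ ·) 1 fun i _ => one_le_pow₀ ht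

lemma strictMonoOn_geom_sum {n : ℕ} (hn : 2 ≤ n) :
    StrictMonoOn (fun t : ℝ => ∑ i ∈ range n, t ^ i) (Set.Ici 0) := by
  intro a ha b _ hab
  refine sum_lt_sum (fun i _ => pow_le_pow_left₀ ha hab.le i) ⟨1, mem_range.2 hn, by simpa using hab⟩

lemma image_mul_two_sub_root_eq {n : ℕ} (hn : 2 ≤ n) {G : ℝ → ℝ}
    (hG : ∀ τ : ℝ, (n : ℝ) ≤ τ → 1 ≤ G τ ∧ ∑ i ∈ range n, G τ ^ i = τ) :
    (fun τ : ℝ => τ * (2 - G τ)) '' Set.Ici (n : ℝ) =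
      (fun t : ℝ => (∑ i ∈ range n, t ^ i) * (2 - t)) '' Set.Ici 1 := by
  have hGS : ∀ t : ℝ, 1 ≤ t → G (∑ i ∈ range n, t ^ i) = t := fun t ht =>
    have hτ := hG _ (natCast_le_geom_sum ht)
    (strictMonoOn_geom_sum hn).injOn (zero_le_one.trans hτ.1) (zero_le_one.trans ht) hτ.2
  have hGimage : G '' Set.Ici (n : ℝ) = Set.Ici 1 :=
    Set.Subset.antisymm (Set.image_subset_iff.2 fun τ hτ => (hG τ hτ).1)
      fun t ht => ⟨_, natCast_le_geom_sum ht, hGS t ht⟩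
  rw [← hGimage, ← Set.image_comp]
  exact Set.image_congr fun τ hτ => by simp only [Function.comp_apply, (hG τ hτ).2]

lemma upperBounds_image_Ici_eq_Ioo {f : ℝ → ℝ} {a b : ℝ} (hab : a < b)
    (hf : ContinuousOn f (Set.Icc a b)) (hfb : ∀ t, b ≤ t → f t ≤ f b) :
    upperBounds (f '' Set.Ici a) = upperBounds (f '' Set.Ioo a b) := by
  have hsub : Set.Ioo a b ⊆ Set.Ici a := Set.Ioo_subset_Icc_self.trans Set.Icc_subset_Ici_self
  refine Set.Subset.antisymm (upperBounds_mono_set (Set.image_mono hsub)) fun c hc => ?_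
  have hIcc : c ∈ upperBounds (f '' Set.Icc a b) := by
    rw [← closure_Ioo hab.ne] at hf ⊢
    exact upperBounds_mono_set hf.image_closure (by rwa [upperBounds_closure])
  rintro _ ⟨t, ht, rfl⟩
  rcases le_total t b with htb | hbt
  · exact hIcc ⟨t, ⟨ht, htb⟩, rfl⟩
  · exact (hfb t hbt).trans (hIcc ⟨b, Set.right_mem_Icc.2 hab.le, rfl⟩)

lemma csSup_image_Ici_eq_Ioo {f : ℝ → ℝ} {a b : ℝ} (hab : a < b)
    (hf : ContinuousOn f (Set.Icc a b)) (hfb : ∀ t, b ≤ t → f t ≤ f b) :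
    sSup (f '' Set.Ici a) = sSup (f '' Set.Ioo a b) := by
  have hne : (f '' Set.Ioo a b).Nonempty := (Set.nonempty_Ioo.2 hab).image f
  have hbdd : BddAbove (f '' Set.Ioo a b) :=
    (isCompact_Icc.bddAbove_image hf).mono (Set.image_mono Set.Ioo_subset_Icc_self)
  refine IsLUB.csSup_eq ?_ (Set.nonempty_Ici.image f)
  exact (isLUB_congr (upperBounds_image_Ici_eq_Ioo hab hf hfb)).2 (isLUB_csSup hne hbdd)

lemma geom_sum_mul_two_sub_eq {n : ℕ} (hn : n ≠ 1) :
    (∑ i ∈ range n, (2 * n / (n + 1) : ℝ) ^ i) * (2 - 2 * n / (n + 1)) =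
      2 / ((n : ℝ) - 1) * (2 ^ n * (1 - 1 / ((n : ℝ) + 1)) ^ n - 1) := by
  have hn1 : (n : ℝ) - 1 ≠ 0 := sub_ne_zero.2 (by exact_mod_cast hn)
  have hsub_one : (2 * n / (n + 1) : ℝ) - 1 = (n - 1) / (n + 1) := by field_simp; ring
  have htwo_sub : (2 : ℝ) - 2 * n / (n + 1) = 2 / (n + 1) := by field_simp; ring
  have hbase : (2 : ℝ) * (1 - 1 / (n + 1)) = 2 * n / (n + 1) := by field_simp; ring
  rw [geom_sum_eq (sub_ne_zero.1 (hsub_one ▸ div_ne_zero hn1 (by positivity))), hsub_one,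
    htwo_sub, ← mul_pow, hbase]
  field_simp

theorem stmt_13 (n : ℕ) (hn : 2 ≤ n) (G : ℝ → ℝ)
    (hG : ∀ τ : ℝ, (n : ℝ) ≤ τ → 1 ≤ G τ ∧ (∑ i ∈ Finset.range n, (G τ) ^ i) = τ) :
    sSup ((fun τ : ℝ => τ * (2 - G τ)) '' Set.Ici (n : ℝ)) =
      sSup ((fun t : ℝ => (∑ i ∈ Finset.range n, t ^ i) * (2 - t)) '' Set.Ioo 1 2) ∧
    (2 / ((n : ℝ) - 1)) * (2 ^ n * (1 - 1 / ((n : ℝ) + 1)) ^ n - 1) ≤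
      sSup ((fun τ : ℝ => τ * (2 - G τ)) '' Set.Ici (n : ℝ)) := by
  set f : ℝ → ℝ := fun t => (∑ i ∈ range n, t ^ i) * (2 - t)
  have hf : Continuous f := by fun_prop
  have hf_le_two : ∀ t, 2 ≤ t → f t ≤ f 2 := fun t ht => by
    simpa [f] using mul_nonpos_of_nonneg_of_nonpos
      (sum_nonneg fun i _ => pow_nonneg (by linarith) i) (by linarith : 2 - t ≤ 0)
  have hsup : sSup (f '' Set.Ici 1) = sSup (f '' Set.Ioo 1 2) :=
    csSup_image_Ici_eq_Ioo one_lt_two hf.continuousOn hf_le_two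
  rw [image_mul_two_sub_root_eq hn hG, hsup]
  refine ⟨rfl, ?_⟩
  have hn' : (2 : ℝ) ≤ n := by exact_mod_cast hn
  have ht₀ : (2 * n / (n + 1) : ℝ) ∈ Set.Ioo 1 2 := by
    constructor
    · rw [lt_div_iff₀ (by positivity)]; linarith
    · rw [div_lt_iff₀ (by positivity)]; linarith
  rw [← geom_sum_mul_two_sub_eq (by omega)]
  exact le_csSup ((isCompact_Icc.bddAbove_image hf.continuousOn).mono
    (Set.image_mono Set.Ioo_subset_Icc_self)) ⟨_, ht₀, rfl⟩
end

section
/- Let α ∈ ℝⁿ be completely irrational, and let (m_ν) be its sequence of best approximation vectors with M_ν = max_j |m_{j,ν}| and ζ_ν = ‖m_ν·α‖ (distance of the inner product to the nearest integer). Let d > 0 and define f(x) = ∑_{ν=1}^∞ M_ν^{−d} · (sin(πζ_ν)/ζ_ν) · sin(π(2 m_ν·x + ζ_ν)). If d < 2ω̂(α) − ω(α), then ∑_{k=0}^{t−1} f(kα) → +∞ as t → ∞. -/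
open Filter Finset Real

private lemma telesc15 (x : ℝ) : ∀ t : ℕ, ∑ k ∈ Finset.range t,
    Real.sin x * Real.sin ((2*k+1)*x) = Real.sin (t*x)^2 := by
  intro t
  induction t with
  | zero => simp
  | succ t ih =>
      rw [Finset.sum_range_succ, ih]
      push_cast
      have h1 : ((t:ℝ)+1)*x = t*x + x := by ring
      have h2 : (2*(t:ℝ)+1)*x = t*x + (t*x + x) := by ring
      rw [h1, h2, Real.sin_add (t*x) (t*x+x), Real.sin_add (t*x) x, Real.cos_add (t*x) x]
      nlinarith [Real.sin_sq_add_cos_sq (t*x), Real.sin_sq_add_cos_sq x]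

theorem stmt_15 {n : ℕ} (hn : 1 ≤ n) (α : Fin n → ℝ)
    (hirr : ∀ (v : Fin n → ℤ) (c : ℤ),
      (∑ i, (v i : ℝ) * α i) + (c : ℝ) = 0 → v = 0 ∧ c = 0)
    (m : ℕ → Fin n → ℤ) (M : ℕ → ℕ) (ζ : ℕ → ℝ) (ω ωhat d : ℝ)
    (hMdef : ∀ ν, M ν = Finset.univ.sup fun i => (m ν i).natAbs)
    (hMmono : StrictMono M)
    (hζpos : ∀ ν, 0 < ζ ν) (hζanti : StrictAnti ζ)
    (hζ0 : Filter.Tendsto ζ Filter.atTop (nhds 0))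
    (hζdef : ∀ ν, ∃ c : ℤ, (∑ i, (m ν i : ℝ) * α i) = (c : ℝ) + ζ ν)
    (hexp : ∀ δ > (0:ℝ), ∀ᶠ ν in Filter.atTop,
      (M ν : ℝ) ^ (-(ω + δ)) ≤ ζ ν ∧ ζ ν ≤ (M (ν + 1) : ℝ) ^ (-(ωhat - δ)))
    (hd : 0 < d) (hdlt : d < 2 * ωhat - ω)
    (hsum : Summable fun ν => (M ν : ℝ) ^ (-d))
    (f : (Fin n → ℝ) → ℝ)
    (hf : ∀ x, f x = ∑' ν : ℕ, (M ν : ℝ) ^ (-d) * (Real.sin (Real.pi * ζ ν) / ζ ν) *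
        Real.sin (Real.pi * (2 * (∑ i, (m ν i : ℝ) * x i) + ζ ν))) :
    Filter.Tendsto (fun t : ℕ => ∑ k ∈ Finset.range t, f (fun i => (k : ℝ) * α i))
      Filter.atTop Filter.atTop := by
  have hMν : ∀ ν : ℕ, (ν : ℝ) ≤ (M ν : ℝ) := fun ν => by exact_mod_cast hMmono.le_apply
  have hζle : ∀ ν, ζ ν ≤ ζ 0 := fun ν => hζanti.antitone (Nat.zero_le ν)
  -- the Birkhoff sum equals a nonnegative series
  have hgnonneg : ∀ t ν : ℕ,
      0 ≤ (M ν : ℝ) ^ (-d) / ζ ν * Real.sin ((t:ℝ) * (Real.pi * ζ ν))^2 := by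
    intro t ν
    have := hζpos ν
    positivity
  have hgsummable : ∀ t : ℕ, Summable (fun ν =>
      (M ν : ℝ) ^ (-d) / ζ ν * Real.sin ((t:ℝ) * (Real.pi * ζ ν))^2) := by
    intro t
    apply Summable.of_nonneg_of_le (hgnonneg t)
      (f := fun ν => ((Real.pi * t)^2 * ζ 0) * (M ν : ℝ) ^ (-d))
    · intro ν
      have hz := hζpos ν
      have hsq : Real.sin ((t:ℝ) * (Real.pi * ζ ν))^2 ≤ ((t:ℝ) * (Real.pi * ζ ν))^2 :=
        Real.sin_sq_le_sq
      have hMd : (0:ℝ) ≤ (M ν : ℝ) ^ (-d) := Real.rpow_nonneg (Nat.cast_nonneg _) _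
      have h1 : (M ν : ℝ) ^ (-d) / ζ ν * Real.sin ((t:ℝ) * (Real.pi * ζ ν))^2
          ≤ (M ν : ℝ) ^ (-d) / ζ ν * ((t:ℝ) * (Real.pi * ζ ν))^2 :=
        mul_le_mul_of_nonneg_left hsq (by positivity)
      refine h1.trans ?_
      have hexpand : (M ν : ℝ) ^ (-d) / ζ ν * ((t:ℝ) * (Real.pi * ζ ν))^2
          = ((Real.pi * t)^2 * ζ ν) * (M ν : ℝ) ^ (-d) := by
        field_simp
      rw [hexpand]
      apply mul_le_mul_of_nonneg_right _ hMd
      nlinarith [hζle ν, hζpos ν, sq_nonneg (Real.pi * (t:ℝ))]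
    · exact hsum.mul_left _
  have key : ∀ t : ℕ, ∑ k ∈ Finset.range t, f (fun i => (k : ℝ) * α i)
      = ∑' ν, (M ν : ℝ) ^ (-d) / ζ ν * Real.sin ((t:ℝ) * (Real.pi * ζ ν))^2 := by
    intro t
    have hterm : ∀ (k : ℕ) (ν : ℕ),
        (M ν : ℝ) ^ (-d) * (Real.sin (Real.pi * ζ ν) / ζ ν) *
          Real.sin (Real.pi * (2 * (∑ i, (m ν i : ℝ) * ((k:ℝ) * α i)) + ζ ν))
        = (M ν : ℝ) ^ (-d) / ζ ν *
            (Real.sin (Real.pi * ζ ν) * Real.sin ((2*(k:ℝ)+1) * (Real.pi * ζ ν))) := by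
      intro k ν
      obtain ⟨c, hc⟩ := hζdef ν
      have hsum' : (∑ i, (m ν i : ℝ) * ((k:ℝ) * α i)) = (k:ℝ) * ((c:ℝ) + ζ ν) := by
        rw [← hc, Finset.mul_sum]
        exact Finset.sum_congr rfl fun i _ => by ring
      rw [hsum']
      have harg : Real.pi * (2 * ((k:ℝ) * ((c:ℝ) + ζ ν)) + ζ ν)
          = (2*(k:ℝ)+1) * (Real.pi * ζ ν) + ((k * c : ℤ):ℝ) * (2 * Real.pi) := by
        push_cast; ring
      rw [harg, Real.sin_add_int_mul_two_pi]
      ring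
    calc ∑ k ∈ Finset.range t, f (fun i => (k : ℝ) * α i)
        = ∑ k ∈ Finset.range t, ∑' ν, (M ν : ℝ) ^ (-d) / ζ ν *
            (Real.sin (Real.pi * ζ ν) * Real.sin ((2*(k:ℝ)+1) * (Real.pi * ζ ν))) := by
          refine Finset.sum_congr rfl fun k _ => ?_
          rw [hf]
          exact tsum_congr fun ν => hterm k ν
      _ = ∑' ν, ∑ k ∈ Finset.range t, (M ν : ℝ) ^ (-d) / ζ ν *
            (Real.sin (Real.pi * ζ ν) * Real.sin ((2*(k:ℝ)+1) * (Real.pi * ζ ν))) := by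
          refine (Summable.tsum_finsetSum fun k _ => ?_).symm
          apply Summable.of_norm_bounded (g := fun ν => Real.pi * (M ν : ℝ) ^ (-d)) (hsum.mul_left _)
          intro ν
          have hz := hζpos ν
          have h1 : |Real.sin (Real.pi * ζ ν)| ≤ Real.pi * ζ ν :=
            (Real.abs_sin_le_abs (x := Real.pi * ζ ν)).trans_eq (abs_of_nonneg (by positivity))
          have h2 : |Real.sin ((2*(k:ℝ)+1) * (Real.pi * ζ ν))| ≤ 1 := Real.abs_sin_le_one _
          have hMd : (0:ℝ) ≤ (M ν : ℝ) ^ (-d) := Real.rpow_nonneg (Nat.cast_nonneg _) _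
          rw [Real.norm_eq_abs, abs_mul, abs_mul, abs_of_nonneg (by positivity :
            (0:ℝ) ≤ (M ν : ℝ) ^ (-d) / ζ ν)]
          calc (M ν : ℝ) ^ (-d) / ζ ν * (|Real.sin (Real.pi * ζ ν)| *
              |Real.sin ((2*(k:ℝ)+1) * (Real.pi * ζ ν))|)
              ≤ (M ν : ℝ) ^ (-d) / ζ ν * ((Real.pi * ζ ν) * 1) := by
                apply mul_le_mul_of_nonneg_left _ (by positivity)
                exact mul_le_mul h1 h2 (abs_nonneg _) (by positivity)
            _ = Real.pi * (M ν : ℝ) ^ (-d) := by field_simp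
      _ = ∑' ν, (M ν : ℝ) ^ (-d) / ζ ν * Real.sin ((t:ℝ) * (Real.pi * ζ ν))^2 := by
          refine tsum_congr fun ν => ?_
          rw [← Finset.mul_sum, telesc15 (Real.pi * ζ ν) t]
  -- sign facts for exponents
  have hω0 : 0 ≤ ω := by
    by_contra hneg
    push_neg at hneg
    have hδ : (0:ℝ) < -ω/2 := by linarith
    have h1 := (hexp _ hδ).and ((hζ0.eventually (gt_mem_nhds one_pos)).and
      (Filter.eventually_atTop.mpr ⟨1, fun ν hν => hν⟩))
    obtain ⟨ν, ⟨hlow, -⟩, hζ1, hν1⟩ := h1.exists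
    have hM1 : (1:ℝ) ≤ (M ν : ℝ) := le_trans (by exact_mod_cast hν1) (hMν ν)
    have : (1:ℝ) ≤ (M ν : ℝ) ^ (-(ω + -ω/2)) :=
      Real.one_le_rpow hM1 (by linarith)
    linarith
  have hωhat : 0 < ωhat := by linarith
  -- choose δ
    -- δ small enough that 3δ < 2ωhat - ω - d and δ < ωhat
  set δ : ℝ := min ((2 * ωhat - ω - d)/4) (ωhat/2) with hδdef
  have hδpos : 0 < δ := lt_min (by linarith) (by linarith)
  have hδ1 : 3 * δ < 2 * ωhat - ω - d := by
    have : δ ≤ (2 * ωhat - ω - d)/4 := min_le_left _ _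
    linarith
  have hβpos : 0 < ωhat - δ := by
    have : δ ≤ ωhat/2 := min_le_right _ _
    linarith
  set β : ℝ := ωhat - δ with hβdef
  set e : ℝ := (d + ω + δ)/β with hedef
  have hdωδpos : 0 < d + ω + δ := by linarith
  have hepos : 0 < e := div_pos hdωδpos hβpos
  have helt : e < 2 := by
    rw [hedef, div_lt_iff₀ hβpos]
    rw [hβdef]; linarith
  obtain ⟨N, hN⟩ := Filter.eventually_atTop.mp (hexp δ hδpos)
  -- main lower bound, eventually in t
  have hmain : ∀ᶠ t : ℕ in Filter.atTop,
      4 * 2 ^ (-e) * (t:ℝ) ^ ((2:ℝ) - e) ≤ ∑ k ∈ Finset.range t, f (fun i => (k : ℝ) * α i) := by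
    have hζN : 0 < ζ (N+1) := hζpos _
    rw [Filter.eventually_atTop]
    refine ⟨max 1 (Nat.ceil (1/ζ (N+1))), fun t ht => ?_⟩
    have ht1 : 1 ≤ t := le_trans (le_max_left _ _) ht
    have htpos : (0:ℝ) < t := by exact_mod_cast ht1
    have htceil : (1/ζ (N+1) : ℝ) ≤ t := by
      have h := le_trans (le_max_right 1 (Nat.ceil (1/ζ (N+1)))) ht
      exact le_trans (Nat.le_ceil _) (by exact_mod_cast h)
    have h2t : (0:ℝ) < 2*(t:ℝ) := by positivity
    have htζ : 1/(2*(t:ℝ)) < ζ (N+1) := by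
      rw [div_lt_iff₀ h2t]
      have h2 : 1 ≤ ζ (N+1) * (t:ℝ) := by
        rw [div_le_iff₀ hζN] at htceil
        nlinarith
      nlinarith
    have hex : ∃ ν, ζ ν ≤ 1/(2*(t:ℝ)) := by
      obtain ⟨ν, hν⟩ := (hζ0.eventually
        (gt_mem_nhds (show (0:ℝ) < 1/(2*(t:ℝ)) by positivity))).exists
      exact ⟨ν, hν.le⟩
    set ν₀ := Nat.find hex with hν₀def
    have hν₀le : ζ ν₀ ≤ 1/(2*(t:ℝ)) := Nat.find_spec hex
    have hν₀gt : N + 1 < ν₀ := by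
      by_contra hle
      push_neg at hle
      have := hζanti.antitone hle
      linarith
    have hqlt : 1/(2*(t:ℝ)) < ζ (ν₀ - 1) := by
      have h := Nat.find_min hex (m := ν₀ - 1) (by omega)
      exact lt_of_not_ge h
    have hν₀eq : (ν₀ - 1) + 1 = ν₀ := by omega
    have hb1 : (M ν₀ : ℝ) ^ (-(ω + δ)) ≤ ζ ν₀ := (hN ν₀ (by omega)).1
    have hb2 : ζ (ν₀ - 1) ≤ (M ν₀ : ℝ) ^ (-β) := by
      have h := (hN (ν₀ - 1) (by omega)).2
      rwa [hν₀eq] at h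
    have hM1' : (1:ℝ) ≤ (M ν₀ : ℝ) :=
      le_trans (by exact_mod_cast (show 1 ≤ ν₀ by omega)) (hMν ν₀)
    have hMν₀pos : (0:ℝ) < (M ν₀ : ℝ) := lt_of_lt_of_le one_pos hM1'
    have hMβpos : (0:ℝ) < (M ν₀:ℝ)^β := Real.rpow_pos_of_pos hMν₀pos _
    have hMlt : (M ν₀ : ℝ) ^ β < 2 * (t:ℝ) := by
      have h1 : 1/(2*(t:ℝ)) < 1/((M ν₀:ℝ) ^ β) := by
        rw [one_div ((M ν₀:ℝ) ^ β), ← Real.rpow_neg hMν₀pos.le]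
        exact lt_of_lt_of_le hqlt hb2
      rw [div_lt_div_iff₀ h2t hMβpos] at h1
      linarith
    have hMle : (M ν₀ : ℝ) ≤ (2*(t:ℝ)) ^ (1/β) := by
      have h0 : (M ν₀:ℝ) = ((M ν₀:ℝ)^β)^(1/β) := by
        rw [← Real.rpow_mul hMν₀pos.le, mul_one_div_cancel hβpos.ne', Real.rpow_one]
      rw [h0]
      exact Real.rpow_le_rpow hMβpos.le hMlt.le (by positivity)
    have hMe : ((2*(t:ℝ)) ^ (-e)) ≤ (M ν₀ : ℝ) ^ (-(d+ω+δ)) := by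
      have h1 : (M ν₀:ℝ) ^ (d+ω+δ) ≤ (2*(t:ℝ)) ^ e := by
        calc (M ν₀:ℝ) ^ (d+ω+δ) ≤ ((2*(t:ℝ))^(1/β)) ^ (d+ω+δ) :=
              Real.rpow_le_rpow hMν₀pos.le hMle hdωδpos.le
          _ = (2*(t:ℝ)) ^ e := by
              rw [← Real.rpow_mul h2t.le, one_div_mul_eq_div]
      rw [Real.rpow_neg h2t.le, Real.rpow_neg hMν₀pos.le]
      exact inv_anti₀ (Real.rpow_pos_of_pos hMν₀pos _) h1
    -- lower bound for the ν₀-th term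
    have hζt2 : (t:ℝ) * ζ ν₀ ≤ 1/2 := by
      have h := mul_le_mul_of_nonneg_left hν₀le htpos.le
      have h2 : (t:ℝ) * (1/(2*(t:ℝ))) = 1/2 := by field_simp
      linarith [h, h2.le]
    have hζν₀pos := hζpos ν₀
    have hsin : 2*((t:ℝ)*ζ ν₀) ≤ Real.sin ((t:ℝ)*(Real.pi*ζ ν₀)) := by
      have hy0 : 0 ≤ Real.pi * ((t:ℝ)*ζ ν₀) := by positivity
      have hy1 : Real.pi * ((t:ℝ)*ζ ν₀) ≤ Real.pi/2 := by nlinarith [Real.pi_pos]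
      have h := Real.mul_le_sin hy0 hy1
      have harg : (t:ℝ)*(Real.pi*ζ ν₀) = Real.pi*((t:ℝ)*ζ ν₀) := by ring
      rw [harg]
      calc 2*((t:ℝ)*ζ ν₀) = 2/Real.pi * (Real.pi*((t:ℝ)*ζ ν₀)) := by
            field_simp
        _ ≤ _ := h
    have hsinsq : (2*((t:ℝ)*ζ ν₀))^2 ≤ Real.sin ((t:ℝ)*(Real.pi*ζ ν₀))^2 :=
      pow_le_pow_left₀ (by positivity) hsin 2
    have hMd : (0:ℝ) ≤ (M ν₀ : ℝ) ^ (-d) := Real.rpow_nonneg (Nat.cast_nonneg _) _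
    have hterm_lb : 4*(t:ℝ)^2 * (2*(t:ℝ))^(-e)
        ≤ (M ν₀:ℝ)^(-d)/ζ ν₀ * Real.sin ((t:ℝ)*(Real.pi*ζ ν₀))^2 := by
      calc 4*(t:ℝ)^2 * (2*(t:ℝ))^(-e)
          ≤ 4*(t:ℝ)^2 * (M ν₀:ℝ)^(-(d+ω+δ)) :=
            mul_le_mul_of_nonneg_left hMe (by positivity)
        _ = 4*(t:ℝ)^2 * ((M ν₀:ℝ)^(-(ω+δ)) * (M ν₀:ℝ)^(-d)) := by
            rw [← Real.rpow_add hMν₀pos]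
            congr 1
            ring
        _ ≤ 4*(t:ℝ)^2 * (ζ ν₀ * (M ν₀:ℝ)^(-d)) := by
            apply mul_le_mul_of_nonneg_left (mul_le_mul_of_nonneg_right hb1 hMd)
            positivity
        _ = (M ν₀:ℝ)^(-d)/ζ ν₀ * (2*((t:ℝ)*ζ ν₀))^2 := by
            field_simp
            ring
        _ ≤ (M ν₀:ℝ)^(-d)/ζ ν₀ * Real.sin ((t:ℝ)*(Real.pi*ζ ν₀))^2 :=
            mul_le_mul_of_nonneg_left hsinsq (by positivity)
    have hge : (M ν₀:ℝ)^(-d)/ζ ν₀ * Real.sin ((t:ℝ)*(Real.pi*ζ ν₀))^2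
        ≤ ∑' ν, (M ν : ℝ) ^ (-d) / ζ ν * Real.sin ((t:ℝ) * (Real.pi * ζ ν))^2 :=
      Summable.le_tsum (hgsummable t) ν₀ (fun j _ => hgnonneg t j)
    have hEq : 4 * 2^(-e) * (t:ℝ)^((2:ℝ)-e) = 4*(t:ℝ)^2 * (2*(t:ℝ))^(-e) := by
      rw [Real.mul_rpow (by norm_num : (0:ℝ) ≤ 2) htpos.le,
        show (2:ℝ)-e = 2 + (-e) by ring, Real.rpow_add htpos,
        show ((2:ℝ):ℝ) = ((2:ℕ):ℝ) by norm_num, Real.rpow_natCast]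
      ring
    rw [key t, hEq]
    exact le_trans hterm_lb hge
  have hφ : Filter.Tendsto (fun t : ℕ => 4 * 2^(-e) * (t:ℝ)^((2:ℝ)-e))
      Filter.atTop Filter.atTop := by
    have hc : (0:ℝ) < 4 * 2^(-e) := by positivity
    exact ((tendsto_rpow_atTop (by linarith : (0:ℝ) < 2 - e)).comp
      tendsto_natCast_atTop_atTop).const_mul_atTop hc
  exact tendsto_atTop_mono' _ hmain hφ
end
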